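/- Let X be a distance-regular graph on n vertices of diameter d, with distance matrices A_0, …, A_d, distinct eigenvalues θ_0 > θ_1 > … > θ_d, and spectral idempotents E_0, …, E_d. Suppose P and Q are (d+1)×(d+1) real matrices satisfying A_i = Σ_{j=0}^d P_{ji}·E_j for all i and E_j = (1/n)·Σ_{i=0}^d Q_{ij}·A_i for all j. Then for every ℓ ∈ {0, …, d} and every t ∈ ℝ, the mixing matrix M(t) satisfies M(t)·E_ℓ = μ_ℓ(t)·E_ℓ, where μ_ℓ(t) = Σ_{k=0}^d (1/n²)·(Σ_{r=0}^d e^{iθ_r t}·Q_{kr})·(Σ_{j=0}^d e^{−iθ_j t}·Q_{kj})·P_{ℓk}. -/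

import Mathlib

open Matrix
open Fin.NatCast

/-- The transition matrix `U(t) = exp(itA)` of the continuous-time quantum walk on `G`. -/
noncomputable def transitionMatrix {V : Type*} [Fintype V] [DecidableEq V]
    (G : SimpleGraph V) (t : ℝ) : Matrix V V ℂ :=
  letI := Classical.decRel G.Adj
  NormedSpace.exp ((Complex.I * (t : ℂ)) • G.adjMatrix ℂ)

/-- `G` admits perfect state transfer from `u` to `v` at time `t`. -/
def HasPST {V : Type*} [Fintype V] [DecidableEq V]
    (G : SimpleGraph V) (u v : V) (t : ℝ) : Prop :=
  u ≠ v ∧ ∃ μ : ℂ, transitionMatrix G t *ᵥ (Pi.single u 1 : V → ℂ)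
      = μ • (Pi.single v 1 : V → ℂ)

/-- `G` is a distance-regular graph of diameter `d` with intersection parameters `b`, `c`. -/
def IsDRG {V : Type*} [Fintype V] [DecidableEq V] (G : SimpleGraph V)
    (d : ℕ) (b c : ℕ → ℕ) : Prop :=
  G.Connected ∧ (∀ u v, G.dist u v ≤ d) ∧ (∃ u v, G.dist u v = d) ∧
  (∀ i, 1 ≤ i → i ≤ d → ∀ u v : V, G.dist u v = i →
      Nat.card {w : V // G.Adj v w ∧ G.dist u w = i - 1} = c i) ∧
  (∀ i, i ≤ d - 1 → ∀ u v : V, G.dist u v = i →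
      Nat.card {w : V // G.Adj v w ∧ G.dist u w = i + 1} = b i)

/-- The `i`-th distance matrix of a graph. -/
noncomputable def distMatrix {V : Type*} [Fintype V] [DecidableEq V] (G : SimpleGraph V)
    (i : ℕ) : Matrix V V ℝ :=
  Matrix.of fun u v => if G.dist u v = i then 1 else 0

/-- The mixing matrix `M(t) = U(t) ∘ conj(U(t))` (entrywise product). -/
noncomputable def mixingMatrix {V : Type*} [Fintype V] [DecidableEq V]
    (G : SimpleGraph V) (t : ℝ) : Matrix V V ℂ :=
  Matrix.of fun i j =>
    transitionMatrix G t i j * (starRingEnd ℂ) (transitionMatrix G t i j)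

/-- The matrices `E j` form the spectral decomposition of `M` with (distinct)
eigenvalues `lam j`. -/
def IsSpectralDecomp {V : Type*} [Fintype V] [DecidableEq V] {d : ℕ}
    (M : Matrix V V ℝ) (lam : Fin (d+1) → ℝ) (E : Fin (d+1) → Matrix V V ℝ) : Prop :=
  (∀ j, (E j).IsSymm) ∧ (∀ j k, E j * E k = if j = k then E j else 0) ∧
  (∑ j, E j = 1) ∧ M = ∑ j, lam j • E j

/-!
Because the spectral idempotents `E j` are complete orthogonal idempotents, the exponential
`U(t) = exp(itA)` is `∑ⱼ e^{iθⱼt} Eⱼ`, and `conj U(t) = ∑ⱼ e^{-iθⱼt} Eⱼ`. Substituting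
`Eⱼ = n⁻¹ ∑ₖ Qₖⱼ Aₖ` expresses both as combinations of distance matrices. The distance matrices
have disjoint `0/1` supports, so they are orthogonal idempotents for the Schur product, which gives
`M(t) = ∑ₖ n⁻² (∑ᵣ e^{iθᵣt} Qₖᵣ)(∑ⱼ e^{-iθⱼt} Qₖⱼ) Aₖ`. Finally `Aₖ Eℓ = Pℓₖ Eℓ`.
-/

open NormedSpace Complex

/-- Unlike `NormedSpace.map_exp`, the target only needs to be a topological ring. -/
theorem AlgHom.map_exp_of_continuous {𝕂 𝔸 𝔹 : Type*} [RCLike 𝕂] [NormedRing 𝔸]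
    [NormedAlgebra 𝕂 𝔸] [CompleteSpace 𝔸] [Ring 𝔹] [Algebra 𝕂 𝔹] [TopologicalSpace 𝔹]
    [IsTopologicalRing 𝔹] [T2Space 𝔹] (f : 𝔸 →ₐ[𝕂] 𝔹) (hf : Continuous f) (x : 𝔸) :
    f (exp x) = exp (f x) := by
  rw [exp_eq_tsum 𝕂, exp_eq_tsum 𝕂, (expSeries_summable' (𝕂 := 𝕂) x).map_tsum f hf]
  simp only [map_smul, map_pow]

theorem LinearMap.sum_smul_sum_smul_of_orthogonal {ι R M : Type*} [Fintype ι] [DecidableEq ι]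
    [CommSemiring R] [AddCommMonoid M] [Module R M] (B : M →ₗ[R] M →ₗ[R] M) {D : ι → M}
    (hD : ∀ i j, B (D i) (D j) = if i = j then D i else 0) (a b : ι → R) :
    B (∑ i, a i • D i) (∑ i, b i • D i) = ∑ i, (a i * b i) • D i := by
  simp [map_sum, map_smul, LinearMap.sum_apply, hD, smul_smul, mul_comm]

namespace CompleteOrthogonalIdempotents

variable {ι A : Type*} [Fintype ι] [DecidableEq ι]

def sumSMulAlgHom {R : Type*} [CommSemiring R] [Semiring A] [Algebra R A] {F : ι → A}
    (hF : CompleteOrthogonalIdempotents F) : (ι → R) →ₐ[R] A :=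
  AlgHom.ofLinearMap (Fintype.linearCombination R F)
    (by simp [Fintype.linearCombination_apply, hF.complete])
    (fun a b => by
      simp only [Fintype.linearCombination_apply, Pi.mul_apply]
      exact ((LinearMap.mul R A).sum_smul_sum_smul_of_orthogonal hF.mul_eq a b).symm)

theorem sumSMulAlgHom_apply {R : Type*} [CommSemiring R] [Semiring A] [Algebra R A] {F : ι → A}
    (hF : CompleteOrthogonalIdempotents F) (a : ι → R) :
    hF.sumSMulAlgHom a = ∑ i, a i • F i := by
  simp [sumSMulAlgHom, Fintype.linearCombination_apply]

/-- `exp` commutes with the algebra map `c ↦ ∑ cᵢ Fᵢ` out of the Banach algebra `ι → ℂ`, where it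
acts coordinatewise. -/
theorem exp_sum_smul [Ring A] [Algebra ℂ A] [TopologicalSpace A] [IsTopologicalRing A]
    [ContinuousSMul ℂ A] [T2Space A] {F : ι → A} (hF : CompleteOrthogonalIdempotents F)
    (c : ι → ℂ) :
    exp (∑ i, c i • F i) = ∑ i, cexp (c i) • F i := by
  have hcont : Continuous (hF.sumSMulAlgHom (R := ℂ)) := by
    simp only [funext (sumSMulAlgHom_apply hF)]
    fun_prop
  rw [← sumSMulAlgHom_apply hF, ← (hF.sumSMulAlgHom (R := ℂ)).map_exp_of_continuous hcont c,
    Pi.exp_def, sumSMulAlgHom_apply, ← exp_eq_exp_ℂ]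

end CompleteOrthogonalIdempotents

namespace Matrix

variable {R m n α : Type*} [CommSemiring R] [NonUnitalNonAssocSemiring α] [Module R α]
  [IsScalarTower R α α] [SMulCommClass R α α]

variable (R m n α) in
def hadamardBilin : Matrix m n α →ₗ[R] Matrix m n α →ₗ[R] Matrix m n α :=
  LinearMap.mk₂ R (· ⊙ ·) (fun A B C => add_hadamard C A B) (fun k A B => smul_hadamard A B k)
    (fun A B C => hadamard_add A B C) (fun k A B => hadamard_smul A B k)

@[simp]
theorem hadamardBilin_apply (A B : Matrix m n α) : hadamardBilin R m n α A B = A ⊙ B := rfl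

end Matrix

theorem SimpleGraph.adjMatrix_map_ofReal {V : Type*} (G : SimpleGraph V) [DecidableRel G.Adj] :
    (G.adjMatrix ℝ).map ((↑) : ℝ → ℂ) = G.adjMatrix ℂ := by
  ext u v
  by_cases h : G.Adj u v <;> simp [h]

section

variable {V : Type*} [Fintype V] [DecidableEq V] {d n : ℕ} {θ : Fin (d+1) → ℝ}
  {E : Fin (d+1) → Matrix V V ℝ} {P Q : Matrix (Fin (d+1)) (Fin (d+1)) ℝ}

theorem IsSpectralDecomp.completeOrthogonalIdempotents {M : Matrix V V ℝ}
    (hE : IsSpectralDecomp M θ E) :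
    CompleteOrthogonalIdempotents E :=
  ⟨OrthogonalIdempotents.iff_mul_eq.mpr hE.2.1, hE.2.2.1⟩

theorem IsSpectralDecomp.exp_smul_map {M : Matrix V V ℝ}
    (hE : IsSpectralDecomp M θ E) (z : ℂ) :
    exp (z • M.map ((↑) : ℝ → ℂ)) = ∑ j, cexp (z * θ j) • (E j).map ((↑) : ℝ → ℂ) := by
  have hM : z • M.map ((↑) : ℝ → ℂ) = ∑ j, (z * θ j) • (E j).map ((↑) : ℝ → ℂ) := by
    rw [hE.2.2.2]
    ext u v
    simp [Matrix.sum_apply, Finset.mul_sum, mul_assoc]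
  rw [hM]
  exact (hE.completeOrthogonalIdempotents.map ofRealHom.mapMatrix).exp_sum_smul _

theorem transitionMatrix_eq_exp (G : SimpleGraph V) [DecidableRel G.Adj] (t : ℝ) :
    transitionMatrix G t = exp ((I * t) • G.adjMatrix ℂ) := by
  rw [transitionMatrix]
  congr!

theorem transitionMatrix_eq_sum_smul (G : SimpleGraph V) [DecidableRel G.Adj]
    (hE : IsSpectralDecomp (G.adjMatrix ℝ) θ E) (t : ℝ) :
    transitionMatrix G t = ∑ j, cexp (I * θ j * t) • (E j).map ((↑) : ℝ → ℂ) := by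
  rw [transitionMatrix_eq_exp, ← G.adjMatrix_map_ofReal, hE.exp_smul_map]
  simp only [mul_right_comm]

theorem mixingMatrix_eq_hadamard (G : SimpleGraph V) (t : ℝ) :
    mixingMatrix G t = transitionMatrix G t ⊙ (transitionMatrix G t).map (starRingEnd ℂ) := rfl

theorem distMatrix_map_hadamard (G : SimpleGraph V) (i j : ℕ) :
    (distMatrix G i).map ((↑) : ℝ → ℂ) ⊙ (distMatrix G j).map ((↑) : ℝ → ℂ) =
      if i = j then (distMatrix G i).map ((↑) : ℝ → ℂ) else 0 := by
  ext u v
  by_cases hi : G.dist u v = i <;> by_cases hj : G.dist u v = j <;> split_ifs <;>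
    simp_all [distMatrix]

theorem transitionMatrix_map_conj (G : SimpleGraph V) [DecidableRel G.Adj]
    (hE : IsSpectralDecomp (G.adjMatrix ℝ) θ E) (t : ℝ) :
    (transitionMatrix G t).map (starRingEnd ℂ) =
      ∑ j, cexp (-(I * θ j * t)) • (E j).map ((↑) : ℝ → ℂ) := by
  rw [transitionMatrix_eq_sum_smul G hE]
  ext u v
  simp [Matrix.sum_apply, ← Complex.exp_conj]

theorem sum_smul_map_eq_sum_smul_distMatrix (G : SimpleGraph V)
    (hQ : ∀ j, E j = ((n : ℝ))⁻¹ • ∑ i, Q i j • distMatrix G i) (c : Fin (d+1) → ℂ) :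
    ∑ j, c j • (E j).map ((↑) : ℝ → ℂ) =
      ∑ k, ((n : ℂ)⁻¹ * ∑ j, c j * Q k j) • (distMatrix G k).map ((↑) : ℝ → ℂ) := by
  simp_rw [hQ]
  ext u v
  simp only [Matrix.sum_apply, Matrix.smul_apply, Matrix.map_apply, smul_eq_mul, ofReal_mul,
    ofReal_sum, Finset.mul_sum, Finset.sum_mul]
  rw [Finset.sum_comm]
  refine Finset.sum_congr rfl fun k _ => Finset.sum_congr rfl fun j _ => ?_
  push_cast
  ring

theorem distMatrix_map_mul_map (G : SimpleGraph V)
    (horth : ∀ j k, E j * E k = if j = k then E j else 0)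
    (hP : ∀ k : Fin (d+1), distMatrix G k = ∑ j, P j k • E j) (k ℓ : Fin (d+1)) :
    (distMatrix G k).map ((↑) : ℝ → ℂ) * (E ℓ).map ((↑) : ℝ → ℂ) =
      (P ℓ k : ℂ) • (E ℓ).map ((↑) : ℝ → ℂ) := by
  have hreal : distMatrix G k * E ℓ = P ℓ k • E ℓ := by
    simp [hP, Finset.sum_mul, horth]
  ext u v
  have h := congrFun₂ hreal u v
  simp only [Matrix.mul_apply, Matrix.smul_apply, smul_eq_mul] at h
  simp only [Matrix.mul_apply, Matrix.map_apply, Matrix.smul_apply, smul_eq_mul]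
  exact_mod_cast h

theorem mixingMatrix_eq_sum_smul_distMatrix (G : SimpleGraph V) [DecidableRel G.Adj]
    (hE : IsSpectralDecomp (G.adjMatrix ℝ) θ E)
    (hQ : ∀ j, E j = ((n : ℝ))⁻¹ • ∑ i, Q i j • distMatrix G i) (t : ℝ) :
    mixingMatrix G t =
      ∑ k, (((n : ℂ) ^ 2)⁻¹ *
          (∑ r, cexp (I * θ r * t) * Q k r) * (∑ j, cexp (-(I * θ j * t)) * Q k j)) •
        (distMatrix G k).map ((↑) : ℝ → ℂ) := by
  rw [mixingMatrix_eq_hadamard, transitionMatrix_map_conj G hE, transitionMatrix_eq_sum_smul G hE,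
    sum_smul_map_eq_sum_smul_distMatrix G hQ, sum_smul_map_eq_sum_smul_distMatrix G hQ,
    ← Matrix.hadamardBilin_apply (R := ℂ), LinearMap.sum_smul_sum_smul_of_orthogonal]
  · refine Finset.sum_congr rfl fun k _ => ?_
    congr 1
    ring
  · intro i j
    simp [distMatrix_map_hadamard, Fin.val_inj]

end

theorem stmt_18_general {V : Type*} [Fintype V] [DecidableEq V] {d n : ℕ}
    (G : SimpleGraph V) [DecidableRel G.Adj]
    (θ : Fin (d+1) → ℝ)
    (E : Fin (d+1) → Matrix V V ℝ)
    (hE : IsSpectralDecomp (G.adjMatrix ℝ) θ E)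
    (P Q : Matrix (Fin (d+1)) (Fin (d+1)) ℝ)
    (hP : ∀ i, distMatrix G i = ∑ j, P j i • E j)
    (hQ : ∀ j, E j = ((n : ℝ))⁻¹ • ∑ i, Q i j • distMatrix G i)
    (ℓ : Fin (d+1)) (t : ℝ) :
    mixingMatrix G t * (E ℓ).map (fun x : ℝ => (x : ℂ)) =
      (∑ k, ((n : ℂ) ^ 2)⁻¹ *
          (∑ r, Complex.exp (Complex.I * (θ r : ℂ) * (t : ℂ)) * (Q k r : ℂ)) *
          (∑ j, Complex.exp (-(Complex.I * (θ j : ℂ) * (t : ℂ))) * (Q k j : ℂ)) *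
          (P ℓ k : ℂ)) •
        (E ℓ).map (fun x : ℝ => (x : ℂ)) := by
  -- the index of `hP` is a natural number, cast into `Fin (d+1)`
  have hP' : ∀ k : Fin (d+1), distMatrix G k = ∑ j, P j k • E j := fun k => by
    simpa using hP k
  rw [mixingMatrix_eq_sum_smul_distMatrix G hE hQ, Finset.sum_mul, Finset.sum_smul]
  refine Finset.sum_congr rfl fun k _ => ?_
  rw [smul_mul_assoc, distMatrix_map_mul_map G hE.2.1 hP', smul_smul]

/-- eigenvalues of the mixing matrix of a distance-regular graph in
terms of the `P` and `Q` matrices of the associated scheme: for every `ℓ` and `t`,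
`M(t) · E ℓ = μ_ℓ(t) • E ℓ` with
`μ_ℓ(t) = ∑ k (1/n²)(∑ r e^{iθ_r t} Q k r)(∑ j e^{-iθ_j t} Q k j) P ℓ k`. -/
theorem stmt_18 {V : Type*} [Fintype V] [DecidableEq V] {d n : ℕ}
    (G : SimpleGraph V) [DecidableRel G.Adj]
    (hn : Fintype.card V = n)
    (hdrg : ∃ b c : ℕ → ℕ, IsDRG G d b c)
    (θ : Fin (d+1) → ℝ) (hθ : StrictAnti θ)
    (hspec : spectrum ℝ (G.adjMatrix ℝ) = Set.range θ)
    (E : Fin (d+1) → Matrix V V ℝ)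
    (hE : IsSpectralDecomp (G.adjMatrix ℝ) θ E)
    (P Q : Matrix (Fin (d+1)) (Fin (d+1)) ℝ)
    (hP : ∀ i, distMatrix G i = ∑ j, P j i • E j)
    (hQ : ∀ j, E j = ((n : ℝ))⁻¹ • ∑ i, Q i j • distMatrix G i)
    (ℓ : Fin (d+1)) (t : ℝ) :
    mixingMatrix G t * (E ℓ).map (fun x : ℝ => (x : ℂ)) =
      (∑ k, ((n : ℂ) ^ 2)⁻¹ *
          (∑ r, Complex.exp (Complex.I * (θ r : ℂ) * (t : ℂ)) * (Q k r : ℂ)) *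
          (∑ j, Complex.exp (-(Complex.I * (θ j : ℂ) * (t : ℂ))) * (Q k j : ℂ)) *
          (P ℓ k : ℂ)) •
        (E ℓ).map (fun x : ℝ => (x : ℂ)) :=
  stmt_18_general G θ E hE P Q hP hQ ℓ t
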